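/- arXiv:1203.2390 — 2 statements merged into one kernel-verified Lean document; each statement's English description precedes it below -/
import Mathlib

section
/- Constant coefficient homogeneous operator coefficient method convergence criterion: the method x_n = Σ_{j=1}^m c_{0,j}x_{n-j} + Σ_{i=1}^k Σ_{j=1}^m c_{i,j}A^{i-1}r_{n-j}, with Σ_j c_{0,j} = 1, converges to a solution of Ax = y for all y and all initial vectors x₀,...,x_{1-m} if and only if for every eigenvalue λ of A, every root X of P(λ,X) = X^m - Σ_j P_j(λ)X^{m-j} satisfies |X| < 1, where P_j(λ) = c_{0,j} - c_{1,j}λ - ... - c_{k,j}λ^k. -/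
/-!
Put e_N = x_N - x* with A x* = y. Because ∑ⱼ c₀ⱼ = 1 the method becomes the homogeneous
recurrence e_N = ∑ⱼ Pⱼ(A) e_{N-j-1}, i.e. iteration of the block companion operator T.
An eigenvector of T with eigenvalue z yields w ≠ 0 killed by zᵐ - ∑ⱼ z^{m-1-j} Pⱼ(A), so by
spectral mapping z is a root of P(λ, ·) for some eigenvalue λ of A. Hence the root condition
forces spectralRadius T < 1, and Gelfand's formula gives Tᴺ → 0. Conversely, a root z with
|z| ≥ 1 at an eigenpair (λ, v) makes zᴺ v an iterate for y = 0 that does not tend to 0; and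
convergence for every y forces A to be onto, hence invertible.
-/

open Matrix Filter Polynomial Topology

section Method

variable {R V : Type*} [CommRing R] [AddCommGroup V] [Module R V]

/-- `methodPoly c k j` is the paper's `P_{j+1}`: the second index of `c` is shifted down by one. -/
noncomputable def methodPoly (c : ℕ → ℕ → R) (k j : ℕ) : R[X] :=
  C (c 0 j) - ∑ i ∈ Finset.range k, C (c (i + 1) j) * X ^ (i + 1)

/-- The values of `x` at `N ≤ 0` are the free initial vectors. -/
def IsMethodIterate (c : ℕ → ℕ → R) (k m : ℕ) (f : Module.End R V) (y : V) (x : ℤ → V) :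
    Prop :=
  ∀ N : ℤ, 1 ≤ N →
    x N = (∑ j ∈ Finset.range m, c 0 j • x (N - (j + 1)))
      + ∑ i ∈ Finset.range k, ∑ j ∈ Finset.range m,
          c (i + 1) j • (f ^ i) (y - f (x (N - (j + 1))))

def IsLinearRecurrence (m : ℕ) (B : ℕ → Module.End R V) (e : ℤ → V) : Prop :=
  ∀ N : ℤ, 1 ≤ N → e N = ∑ j ∈ Finset.range m, B j (e (N - (j + 1)))

def MethodConverges [TopologicalSpace V] (c : ℕ → ℕ → R) (k m : ℕ) (f : Module.End R V) :
    Prop :=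
  ∀ y x, IsMethodIterate c k m f y x →
    ∃ xlim, Tendsto (fun N : ℕ => x N) atTop (𝓝 xlim) ∧ f xlim = y

variable {c : ℕ → ℕ → R} {k m : ℕ} {f : Module.End R V}

lemma eval_methodPoly (μ : R) (j : ℕ) :
    eval μ (methodPoly c k j) = c 0 j - ∑ i ∈ Finset.range k, c (i + 1) j * μ ^ (i + 1) := by
  simp [methodPoly, eval_finsetSum]

lemma aeval_methodPoly_apply (j : ℕ) (v : V) :
    aeval f (methodPoly c k j) v
      = c 0 j • v - ∑ i ∈ Finset.range k, c (i + 1) j • (f ^ (i + 1)) v := by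
  simp [methodPoly, Module.algebraMap_end_apply, LinearMap.sum_apply]

lemma isMethodIterate_iff_isLinearRecurrence (hc : ∑ j ∈ Finset.range m, c 0 j = 1)
    {x : ℤ → V} {xs y : V} (hy : f xs = y) :
    IsMethodIterate c k m f y x ↔
      IsLinearRecurrence m (fun j => aeval f (methodPoly c k j)) (fun N => x N - xs) := by
  have key : ∀ N : ℤ, (∑ j ∈ Finset.range m, c 0 j • x (N - (j + 1)))
      + ∑ i ∈ Finset.range k, ∑ j ∈ Finset.range m,
          c (i + 1) j • (f ^ i) (y - f (x (N - (j + 1))))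
      = xs + ∑ j ∈ Finset.range m, aeval f (methodPoly c k j) (x (N - (j + 1)) - xs) := by
    intro N
    have hres : ∀ i j : ℕ, (f ^ i) (y - f (x (N - (j + 1))))
        = -(f ^ (i + 1)) (x (N - (j + 1)) - xs) := by
      intro i j
      rw [← hy, ← map_sub, ← map_neg, neg_sub, pow_succ, Module.End.mul_apply]
    simp only [hres, aeval_methodPoly_apply, smul_neg, smul_sub, Finset.sum_sub_distrib,
      Finset.sum_neg_distrib, ← Finset.sum_smul, hc, one_smul]
    rw [Finset.sum_comm (s := Finset.range k)]
    abel
  refine forall₂_congr fun N _ => ?_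
  rw [key, sub_eq_iff_eq_add']

end Method

section Existence

variable {α : Type*}

def recSeq (a : α) (F : (ℕ → α) → α) : ℕ → α
  | 0 => a
  | N + 1 => F fun j => if j ≤ N then recSeq a F (N - j) else a
  decreasing_by omega

lemma exists_forall_eq_apply_prev (a : α) (F : (ℕ → α) → α) :
    ∃ x : ℤ → α, ∀ N : ℤ, 1 ≤ N → x N = F fun j => x (N - (j + 1)) := by
  refine ⟨fun N => if 0 ≤ N then recSeq a F N.toNat else a, fun N hN => ?_⟩
  obtain ⟨N, rfl⟩ : ∃ N' : ℕ, N = N' + 1 := ⟨(N - 1).toNat, by omega⟩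
  have hprev : ∀ j : ℕ, (if 0 ≤ (N : ℤ) + 1 - (j + 1) then recSeq a F ((N : ℤ) + 1 - (j + 1)).toNat
      else a) = if j ≤ N then recSeq a F (N - j) else a := by
    intro j
    by_cases hj : j ≤ N
    · rw [if_pos (by omega), if_pos hj]
      congr 1
      omega
    · rw [if_neg (by omega), if_neg hj]
  simp only [hprev, if_pos (by omega : (0 : ℤ) ≤ N + 1)]
  rw [show ((N : ℤ) + 1).toNat = N + 1 by omega, recSeq]

end Existence

lemma zpow_eq_sum_of_pow_eq_sum {K : Type*} [Field K] {z : K} (hz : z ≠ 0) {m : ℕ} {a : ℕ → K}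
    (h : z ^ m = ∑ j ∈ Finset.range m, a j * z ^ (m - 1 - j)) (N : ℤ) :
    z ^ N = ∑ j ∈ Finset.range m, a j * z ^ (N - (j + 1)) := by
  calc z ^ N = z ^ (N - m) * z ^ m := by
        rw [← zpow_natCast, ← zpow_add₀ hz, sub_add_cancel]
    _ = ∑ j ∈ Finset.range m, a j * z ^ (N - (j + 1)) := by
        rw [h, Finset.mul_sum]
        refine Finset.sum_congr rfl fun j hj => ?_
        have hjm : j < m := Finset.mem_range.mp hj
        rw [← zpow_natCast z (m - 1 - j), mul_left_comm, ← zpow_add₀ hz]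
        congr 2
        omega

section Forward

variable {V : Type*} [NormedAddCommGroup V] [NormedSpace ℂ V] [FiniteDimensional ℂ V]
  {c : ℕ → ℕ → ℂ} {k m : ℕ} {f : Module.End ℂ V}

lemma isUnit_of_methodConverges (h : MethodConverges c k m f) : IsUnit f := by
  rw [LinearMap.isUnit_iff_range_eq_top, LinearMap.range_eq_top]
  intro y
  obtain ⟨x, hx⟩ := exists_forall_eq_apply_prev 0 fun u : ℕ → V =>
    (∑ j ∈ Finset.range m, c 0 j • u j)
      + ∑ i ∈ Finset.range k, ∑ j ∈ Finset.range m, c (i + 1) j • (f ^ i) (y - f (u j))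
  obtain ⟨xlim, -, hxlim⟩ := h y x hx
  exact ⟨xlim, hxlim⟩

lemma norm_lt_one_of_methodConverges (hc : ∑ j ∈ Finset.range m, c 0 j = 1)
    (h : MethodConverges c k m f) {μ z : ℂ} (hμ : μ ∈ spectrum ℂ f)
    (hz : z ^ m = ∑ j ∈ Finset.range m, eval μ (methodPoly c k j) * z ^ (m - 1 - j)) :
    ‖z‖ < 1 := by
  by_contra! hz1
  have hz0 : z ≠ 0 := by
    rintro rfl
    norm_num at hz1
  obtain ⟨v, hv⟩ := (Module.End.hasEigenvalue_iff_mem_spectrum.mpr hμ).exists_hasEigenvector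
  have hx : IsMethodIterate c k m f 0 fun N => z ^ N • v := by
    rw [isMethodIterate_iff_isLinearRecurrence hc (map_zero f)]
    intro N _
    simp only [sub_zero, map_smul, Module.End.aeval_apply_of_hasEigenvector hv, smul_smul]
    rw [zpow_eq_sum_of_pow_eq_sum hz0 hz N, Finset.sum_smul]
    simp only [mul_comm]
  obtain ⟨xlim, hlim, hfx⟩ := h 0 _ hx
  have hxlim : xlim = 0 :=
    ((Module.End.isUnit_iff f).mp (isUnit_of_methodConverges h)).1 (hfx.trans (map_zero f).symm)
  subst hxlim
  have hle : ‖v‖ ≤ ‖(0 : V)‖ := ge_of_tendsto' hlim.norm fun N => by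
    rw [norm_smul, norm_zpow, zpow_natCast]
    exact le_mul_of_one_le_left (norm_nonneg v) (one_le_pow₀ hz1)
  exact hv.2 (norm_le_zero_iff.mp (by simpa using hle))

end Forward

section Companion

variable {R V : Type*} [CommRing R] [AddCommGroup V] [Module R V] {m : ℕ}
  {B : ℕ → Module.End R V}

def blockCompanion (m : ℕ) (B : ℕ → Module.End R V) : Module.End R (Fin (m + 1) → V) :=
  LinearMap.pi <| Fin.cons (∑ t : Fin (m + 1), B t ∘ₗ LinearMap.proj t)
    fun s => LinearMap.proj s.castSucc

@[simp]
lemma blockCompanion_apply_zero (u : Fin (m + 1) → V) :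
    blockCompanion m B u 0 = ∑ t : Fin (m + 1), B t (u t) := by
  simp [blockCompanion, LinearMap.sum_apply]

@[simp]
lemma blockCompanion_apply_succ (u : Fin (m + 1) → V) (s : Fin m) :
    blockCompanion m B u s.succ = u s.castSucc := by
  simp [blockCompanion]

lemma blockCompanion_pow_apply {e : ℤ → V} (he : IsLinearRecurrence (m + 1) B e) (N : ℕ) :
    (blockCompanion m B ^ N) (fun s => e (-(s : ℕ))) = fun s : Fin (m + 1) => e (N - (s : ℕ)) := by
  induction N with
  | zero => simp
  | succ N ih =>
    rw [pow_succ', Module.End.mul_apply, ih]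
    funext s
    refine Fin.cases ?_ (fun s => ?_) s
    · rw [blockCompanion_apply_zero, Fin.val_zero, Nat.cast_zero, sub_zero, he _ (by omega),
        ← Fin.sum_univ_eq_sum_range]
      refine Finset.sum_congr rfl fun t _ => ?_
      congr 2
      push_cast
      ring
    · rw [blockCompanion_apply_succ]
      congr 1
      simp only [Fin.val_castSucc, Fin.val_succ]
      push_cast
      ring

lemma exists_pow_smul_eq_sum_of_blockCompanion_apply {u : Fin (m + 1) → V} (hu0 : u ≠ 0) {z : R}
    (hu : blockCompanion m B u = z • u) :
    ∃ w ≠ 0, z ^ (m + 1) • w = ∑ j ∈ Finset.range (m + 1), z ^ (m - j) • B j w := by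
  set w := u (Fin.last m)
  have hgeom : ∀ s, u s = z ^ (m - s) • w := by
    intro s
    induction s using Fin.reverseInduction with
    | last => simp [w]
    | cast s ih =>
      calc u s.castSucc = blockCompanion m B u s.succ := (blockCompanion_apply_succ u s).symm
        _ = z • u s.succ := by rw [hu]; rfl
        _ = z ^ (m - s.castSucc) • w := by
          rw [ih, smul_smul, ← pow_succ']
          congr 2
          simp only [Fin.val_castSucc, Fin.val_succ]
          omega
  have hw : w ≠ 0 := fun hw => hu0 (funext fun s => by rw [hgeom s, hw, smul_zero]; rfl)
  refine ⟨w, hw, ?_⟩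
  calc z ^ (m + 1) • w = z • u 0 := by rw [hgeom 0, smul_smul, ← pow_succ']; rfl
    _ = ∑ t : Fin (m + 1), B t (u t) := by rw [← Pi.smul_apply, ← hu, blockCompanion_apply_zero]
    _ = ∑ t : Fin (m + 1), z ^ (m - t) • B t w := by simp only [hgeom, map_smul]
    _ = _ := Fin.sum_univ_eq_sum_range (fun j => z ^ (m - j) • B j w) (m + 1)

end Companion

section Spectrum

variable {K V : Type*} [Field K] [IsAlgClosed K] [AddCommGroup V] [Module K V]
  [FiniteDimensional K V] {f : Module.End K V}

lemma exists_mem_spectrum_eval_eq_zero {q : K[X]} {w : V} (hw : w ≠ 0) (h : aeval f q w = 0) :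
    ∃ μ ∈ spectrum K f, eval μ q = 0 := by
  have : Nontrivial V := ⟨⟨w, 0, hw⟩⟩
  have h0 : (0 : K) ∈ spectrum K (aeval f q) := by
    rw [spectrum.zero_mem_iff, LinearMap.isUnit_iff_ker_eq_bot, LinearMap.ker_eq_bot']
    exact fun hker => hw (hker w h)
  rwa [spectrum.map_polynomial_aeval_of_nonempty f q
    (spectrum.nonempty_of_isAlgClosed_of_finiteDimensional K f)] at h0

lemma exists_root_of_mem_spectrum_blockCompanion {m : ℕ} (p : ℕ → K[X]) {z : K}
    (hz : z ∈ spectrum K (blockCompanion m fun j => aeval f (p j))) :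
    ∃ μ ∈ spectrum K f, z ^ (m + 1) = ∑ j ∈ Finset.range (m + 1), eval μ (p j) * z ^ (m - j) := by
  obtain ⟨u, hu⟩ := (Module.End.hasEigenvalue_iff_mem_spectrum.mpr hz).exists_hasEigenvector
  obtain ⟨w, hw, hzw⟩ := exists_pow_smul_eq_sum_of_blockCompanion_apply hu.2 hu.apply_eq_smul
  obtain ⟨μ, hμ, hq⟩ := exists_mem_spectrum_eval_eq_zero (f := f)
    (q := C (z ^ (m + 1)) - ∑ j ∈ Finset.range (m + 1), C (z ^ (m - j)) * p j) hw
    (by simp only [map_sub, map_sum, _root_.map_mul, aeval_C, LinearMap.sub_apply,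
      LinearMap.sum_apply, Module.End.mul_apply, Module.algebraMap_end_apply, hzw, sub_self])
  refine ⟨μ, hμ, ?_⟩
  simp only [eval_sub, eval_C, eval_finsetSum, eval_mul] at hq
  rw [sub_eq_zero.mp hq]
  exact Finset.sum_congr rfl fun j _ => mul_comm _ _

end Spectrum

theorem tendsto_pow_atTop_nhds_zero_of_spectralRadius_lt_one {A : Type*} [NormedRing A]
    [NormedAlgebra ℂ A] [CompleteSpace A] {a : A} (ha : spectralRadius ℂ a < 1) :
    Tendsto (fun N : ℕ => a ^ N) atTop (𝓝 0) := by
  obtain ⟨r, hρr, hr1⟩ := ENNReal.lt_iff_exists_nnreal_btwn.mp ha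
  have hgelfand := spectrum.pow_nnnorm_pow_one_div_tendsto_nhds_spectralRadius a
  have hbound : ∀ᶠ N : ℕ in atTop, ‖a ^ N‖ ≤ (r : ℝ) ^ N := by
    filter_upwards [hgelfand.eventually_lt_const hρr, eventually_ge_atTop 1] with N hN hN1
    have hN0 : (N : ℝ) ≠ 0 := by positivity
    have := ENNReal.rpow_lt_rpow hN (by positivity : (0 : ℝ) < N)
    rw [← ENNReal.rpow_mul, one_div, inv_mul_cancel₀ hN0, ENNReal.rpow_one,
      ENNReal.rpow_natCast] at this
    exact_mod_cast this.le
  exact squeeze_zero_norm' hbound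
    (tendsto_pow_atTop_nhds_zero_of_lt_one r.coe_nonneg (by exact_mod_cast hr1))

theorem Module.End.tendsto_pow_apply_atTop_nhds_zero {E : Type*} [NormedAddCommGroup E]
    [NormedSpace ℂ E] [FiniteDimensional ℂ E] {T : Module.End ℂ E}
    (hT : ∀ z ∈ spectrum ℂ T, ‖z‖ < 1) (u : E) :
    Tendsto (fun N : ℕ => (T ^ N) u) atTop (𝓝 0) := by
  rcases subsingleton_or_nontrivial E with hE | hE
  · simp [Subsingleton.elim u 0]
  set T' := Module.End.toContinuousLinearMap E T
  have hρ : spectralRadius ℂ T' < 1 := by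
    have := spectrum.spectralRadius_lt_of_forall_lt T' (r := 1) fun z hz => by
      rw [AlgEquiv.spectrum_eq] at hz
      exact_mod_cast hT z hz
    exact_mod_cast this
  have := ((ContinuousLinearMap.apply ℂ E u).continuous.tendsto 0).comp
    (tendsto_pow_atTop_nhds_zero_of_spectralRadius_lt_one hρ)
  refine this.congr fun N => ?_
  simp only [← map_pow, Function.comp_apply, ContinuousLinearMap.apply_apply, T']
  rfl

lemma isUnit_of_roots_norm_lt_one {V : Type*} [AddCommGroup V] [Module ℂ V] {c : ℕ → ℕ → ℂ}
    {k m : ℕ} {f : Module.End ℂ V} (hc : ∑ j ∈ Finset.range m, c 0 j = 1)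
    (hroots : ∀ μ ∈ spectrum ℂ f, ∀ z : ℂ,
      z ^ m = ∑ j ∈ Finset.range m, eval μ (methodPoly c k j) * z ^ (m - 1 - j) → ‖z‖ < 1) :
    IsUnit f := by
  by_contra hf
  have h := hroots 0 ((spectrum.zero_mem_iff ℂ).mpr hf) 1
    (by simpa [eval_methodPoly] using hc.symm)
  simp at h

lemma methodConverges_of_roots_norm_lt_one {V : Type*} [NormedAddCommGroup V] [NormedSpace ℂ V]
    [FiniteDimensional ℂ V] {c : ℕ → ℕ → ℂ} {k m : ℕ} {f : Module.End ℂ V}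
    (hc : ∑ j ∈ Finset.range m, c 0 j = 1)
    (hroots : ∀ μ ∈ spectrum ℂ f, ∀ z : ℂ,
      z ^ m = ∑ j ∈ Finset.range m, eval μ (methodPoly c k j) * z ^ (m - 1 - j) → ‖z‖ < 1) :
    MethodConverges c k m f := by
  obtain ⟨m, rfl⟩ : ∃ m', m = m' + 1 :=
    Nat.exists_eq_succ_of_ne_zero (by rintro rfl; simp at hc)
  intro y x hx
  obtain ⟨xs, rfl⟩ := ((Module.End.isUnit_iff f).mp (isUnit_of_roots_norm_lt_one hc hroots)).2 y
  have he := (isMethodIterate_iff_isLinearRecurrence hc rfl).mp hx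
  have hT : ∀ z ∈ spectrum ℂ (blockCompanion m fun j => aeval f (methodPoly c k j)), ‖z‖ < 1 := by
    intro z hz
    obtain ⟨μ, hμ, hzμ⟩ := exists_root_of_mem_spectrum_blockCompanion _ hz
    exact hroots μ hμ z (by simpa using hzμ)
  have h0 := ((continuous_apply 0).tendsto 0).comp
    (Module.End.tendsto_pow_apply_atTop_nhds_zero hT fun s => x (-(s : ℕ)) - xs)
  refine ⟨xs, ?_, rfl⟩
  rw [← tendsto_sub_nhds_zero_iff]
  simpa [Function.comp_def, blockCompanion_pow_apply he] using h0

theorem methodConverges_iff {V : Type*} [NormedAddCommGroup V] [NormedSpace ℂ V]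
    [FiniteDimensional ℂ V] {c : ℕ → ℕ → ℂ} {k m : ℕ} (f : Module.End ℂ V)
    (hc : ∑ j ∈ Finset.range m, c 0 j = 1) :
    MethodConverges c k m f ↔ ∀ μ ∈ spectrum ℂ f, ∀ z : ℂ,
      z ^ m = ∑ j ∈ Finset.range m, eval μ (methodPoly c k j) * z ^ (m - 1 - j) → ‖z‖ < 1 :=
  ⟨fun h _ hμ _ hz => norm_lt_one_of_methodConverges hc h hμ hz,
    methodConverges_of_roots_norm_lt_one hc⟩

theorem stmt10_general {n : ℕ} (k m : ℕ) (A : Matrix (Fin n) (Fin n) ℂ)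
    (c : ℕ → ℕ → ℂ)
    (hconsistent : ∑ j ∈ Finset.range m, c 0 j = 1) :
    (∀ (y : Fin n → ℂ) (x : ℤ → Fin n → ℂ),
      (∀ N : ℤ, 1 ≤ N →
        x N = (∑ j ∈ Finset.range m, c 0 j • x (N - (j + 1)))
          + ∑ i ∈ Finset.range k, ∑ j ∈ Finset.range m,
              c (i + 1) j • (A ^ i).mulVec (y - A.mulVec (x (N - (j + 1))))) →
      ∃ xlim : Fin n → ℂ,
        Tendsto (fun N : ℕ => x (N : ℤ)) atTop (nhds xlim) ∧ A.mulVec xlim = y)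
    ↔ ∀ μ ∈ spectrum ℂ A, ∀ z : ℂ,
        z ^ m = ∑ j ∈ Finset.range m,
          (c 0 j - ∑ i ∈ Finset.range k, c (i + 1) j * μ ^ (i + 1)) * z ^ (m - 1 - j) →
        ‖z‖ < 1 := by
  simpa [MethodConverges, IsMethodIterate, eval_methodPoly, ← Matrix.toLin'_pow,
    Matrix.toLin'_apply] using methodConverges_iff (Matrix.toLin' A) hconsistent

theorem stmt10 {n : ℕ} (k m : ℕ) (hm : 1 ≤ m) (A : Matrix (Fin n) (Fin n) ℂ)
    (c : ℕ → ℕ → ℂ)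
    (hconsistent : ∑ j ∈ Finset.range m, c 0 j = 1) :
    (∀ (y : Fin n → ℂ) (x : ℤ → Fin n → ℂ),
      (∀ N : ℤ, 1 ≤ N →
        x N = (∑ j ∈ Finset.range m, c 0 j • x (N - (j + 1)))
          + ∑ i ∈ Finset.range k, ∑ j ∈ Finset.range m,
              c (i + 1) j • (A ^ i).mulVec (y - A.mulVec (x (N - (j + 1))))) →
      ∃ xlim : Fin n → ℂ,
        Tendsto (fun N : ℕ => x (N : ℤ)) atTop (nhds xlim) ∧ A.mulVec xlim = y)
    ↔ ∀ μ ∈ spectrum ℂ A, ∀ z : ℂ,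
        z ^ m = ∑ j ∈ Finset.range m,
          (c 0 j - ∑ i ∈ Finset.range k, c (i + 1) j * μ ^ (i + 1)) * z ^ (m - 1 - j) →
        ‖z‖ < 1 :=
  stmt10_general k m A c hconsistent
end

section
/- Error-minimizing variant: under the same hypotheses (Hermitian part H of A positive definite), for any x_n with error e_n = A⁻¹y - x_n, there exists a scalar α such that x_{n+1} = x_n + α r_n satisfies ‖e_{n+1}‖₂ ≤ sqrt(1 - (λmin(H)/‖A‖₂)²) · ‖e_n‖₂, using that e_{n+1} = (I - αA)e_n. -/
/-!
The new error is `e - α • A e`. For the real step `α = Re⟪e, A e⟫ / ‖A e‖²` (the minimiser along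
the line) its squared norm is `‖e‖² - Re⟪e, A e⟫² / ‖A e‖²`. Since `Re⟪e, A e⟫ = ⟪e, H e⟫` is at
least `λmin(H) ‖e‖²` and `‖A e‖ ≤ ‖A‖ ‖e‖`, the subtracted term is at least
`(λmin(H) / ‖A‖)² ‖e‖²`.
-/

open Matrix
open scoped ComplexOrder

noncomputable def opNorm {n : ℕ} (A : Matrix (Fin n) (Fin n) ℂ) : ℝ :=
  ‖Matrix.toEuclideanCLM (𝕜 := ℂ) A‖

noncomputable def mulVecE {n : ℕ} (A : Matrix (Fin n) (Fin n) ℂ)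
    (v : EuclideanSpace ℂ (Fin n)) : EuclideanSpace ℂ (Fin n) :=
  WithLp.toLp 2 (A.mulVec v)

open RCLike
open scoped InnerProductSpace MatrixOrder

section LineSearch

variable {𝕜 E : Type*} [RCLike 𝕜] [NormedAddCommGroup E] [InnerProductSpace 𝕜 E]

theorem norm_sub_re_inner_div_smul_sq (e v : E) :
    ‖e - ((re ⟪e, v⟫_𝕜 / ‖v‖ ^ 2 : ℝ) : 𝕜) • v‖ ^ 2 = ‖e‖ ^ 2 - re ⟪e, v⟫_𝕜 ^ 2 / ‖v‖ ^ 2 := by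
  rw [@norm_sub_sq 𝕜, inner_smul_right, re_ofReal_mul, norm_smul, norm_ofReal, mul_pow, sq_abs]
  rcases eq_or_ne ‖v‖ 0 with hv | hv
  · simp [hv]
  · field_simp
    ring

theorem exists_norm_sub_smul_apply_le (T : E →L[𝕜] E) {l : ℝ} (hl : 0 ≤ l) {e : E}
    (he : l * ‖e‖ ^ 2 ≤ re ⟪e, T e⟫_𝕜) :
    ∃ α : 𝕜, ‖e - α • T e‖ ≤ √(1 - (l / ‖T‖) ^ 2) * ‖e‖ := by
  suffices ∃ α : 𝕜, ‖e - α • T e‖ ^ 2 ≤ (1 - (l / ‖T‖) ^ 2) * ‖e‖ ^ 2 by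
    obtain ⟨α, hα⟩ := this
    refine ⟨α, ?_⟩
    rw [← Real.sqrt_sq (norm_nonneg e), ← Real.sqrt_mul' _ (sq_nonneg _)]
    exact Real.le_sqrt_of_sq_le hα
  by_cases hTe : T e = 0
  · refine ⟨0, ?_⟩
    have : l * ‖e‖ = 0 := by
      rw [hTe, inner_zero_right, map_zero] at he
      nlinarith [norm_nonneg e]
    rw [zero_smul, sub_zero, sub_mul, one_mul, div_pow, ← mul_div_right_comm, ← mul_pow, this]
    simp
  · refine ⟨_, (norm_sub_re_inner_div_smul_sq e (T e)).le.trans ?_⟩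
    have hTe_le : ‖T e‖ ≤ ‖T‖ * ‖e‖ := T.le_opNorm e
    have hTe_pos : 0 < ‖T e‖ := norm_pos_iff.mpr hTe
    have he_pos : 0 < ‖e‖ := norm_pos_iff.mpr fun h => hTe (by simp [h])
    have hdecrease : (l / ‖T‖) ^ 2 * ‖e‖ ^ 2 ≤ re ⟪e, T e⟫_𝕜 ^ 2 / ‖T e‖ ^ 2 := by
      calc (l / ‖T‖) ^ 2 * ‖e‖ ^ 2 = (l * ‖e‖ ^ 2) ^ 2 / (‖T‖ * ‖e‖) ^ 2 := by
            field_simp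
        _ ≤ re ⟪e, T e⟫_𝕜 ^ 2 / ‖T e‖ ^ 2 := by
            gcongr
    linarith

end LineSearch

namespace Matrix

variable {𝕜 n : Type*} [RCLike 𝕜] [Fintype n] [DecidableEq n]

theorem IsHermitian.iInf_eigenvalues_mul_norm_sq_le {H : Matrix n n 𝕜} (hH : H.IsHermitian)
    (v : EuclideanSpace 𝕜 n) :
    (⨅ i, hH.eigenvalues i) * ‖v‖ ^ 2 ≤ re ⟪v, toEuclideanCLM (𝕜 := 𝕜) H v⟫_𝕜 := by
  have hle : algebraMap ℝ (Matrix n n 𝕜) (⨅ i, hH.eigenvalues i) ≤ H := by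
    refine algebraMap_le_of_le_spectrum ?_ hH.isSelfAdjoint
    rw [hH.spectrum_real_eq_range_eigenvalues]
    rintro _ ⟨i, rfl⟩
    exact ciInf_le (Finite.bddBelow_range _) i
  rw [Algebra.algebraMap_eq_smul_one, RCLike.real_smul_eq_coe_smul (K := 𝕜), le_iff] at hle
  have hpos := (isPositive_toEuclideanLin_iff.mpr hle).re_inner_nonneg_right v
  change 0 ≤ re ⟪v, toEuclideanCLM (𝕜 := 𝕜) (H - _) v⟫_𝕜 at hpos
  rwa [map_sub, map_smul, map_one, _root_.sub_apply, _root_.smul_apply, one_apply_eq_self,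
    inner_sub_right, inner_smul_right, map_sub, re_ofReal_mul, inner_self_eq_norm_sq,
    sub_nonneg] at hpos

theorem re_inner_toEuclideanCLM_conjTranspose (A : Matrix n n 𝕜) (v : EuclideanSpace 𝕜 n) :
    re ⟪v, toEuclideanCLM (𝕜 := 𝕜) Aᴴ v⟫_𝕜 = re ⟪v, toEuclideanCLM (𝕜 := 𝕜) A v⟫_𝕜 := by
  rw [← star_eq_conjTranspose, map_star, ContinuousLinearMap.star_eq_adjoint,
    ContinuousLinearMap.adjoint_inner_right, inner_re_symm]

theorem re_inner_toEuclideanCLM_half_smul_conjTranspose_add (A : Matrix n n 𝕜)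
    (v : EuclideanSpace 𝕜 n) :
    re ⟪v, toEuclideanCLM (𝕜 := 𝕜) ((1 / 2 : 𝕜) • (Aᴴ + A)) v⟫_𝕜 =
      re ⟪v, toEuclideanCLM (𝕜 := 𝕜) A v⟫_𝕜 := by
  have half : (1 / 2 : 𝕜) = ((1 / 2 : ℝ) : 𝕜) := by rw [ofReal_div, ofReal_one, ofReal_ofNat]
  rw [half, map_smul, map_add, _root_.smul_apply, _root_.add_apply, inner_smul_right,
    inner_add_right, re_ofReal_mul, map_add, re_inner_toEuclideanCLM_conjTranspose]
  ring

end Matrix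

theorem mulVecE_one_sub_smul {n : ℕ} (A : Matrix (Fin n) (Fin n) ℂ) (α : ℂ)
    (v : EuclideanSpace ℂ (Fin n)) :
    mulVecE (1 - α • A) v = v - α • mulVecE A v := by
  simp [mulVecE, sub_mulVec, smul_mulVec]

theorem mulVecE_inv_sub_add_smul_residual {n : ℕ} {A : Matrix (Fin n) (Fin n) ℂ} (hA : IsUnit A)
    (y x : EuclideanSpace ℂ (Fin n)) (α : ℂ) :
    mulVecE A⁻¹ y - (x + α • (y - mulVecE A x)) = mulVecE (1 - α • A) (mulVecE A⁻¹ y - x) := by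
  have hAA : mulVecE A (mulVecE A⁻¹ y) = y := by
    simp [mulVecE, mulVec_mulVec, mul_nonsing_inv A ((isUnit_iff_isUnit_det A).mp hA)]
  have hsub : mulVecE A (mulVecE A⁻¹ y - x) = mulVecE A (mulVecE A⁻¹ y) - mulVecE A x :=
    map_sub (toEuclideanCLM (𝕜 := ℂ) A) _ _
  rw [mulVecE_one_sub_smul, hsub, hAA]
  module

theorem stmt14_general {n : ℕ} (A : Matrix (Fin n) (Fin n) ℂ)
    (hA : IsUnit A)
    (H : Matrix (Fin n) (Fin n) ℂ) (hHdef : H = (1 / 2 : ℂ) • (Aᴴ + A))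
    (hH : H.PosDef) (y x r e : EuclideanSpace ℂ (Fin n))
    (hr : r = y - mulVecE A x) (he : e = mulVecE A⁻¹ y - x) :
    (∀ α : ℂ, mulVecE A⁻¹ y - (x + α • r) = mulVecE (1 - α • A) e)
    ∧ ∃ α : ℂ, ‖mulVecE A⁻¹ y - (x + α • r)‖
        ≤ Real.sqrt (1 - ((⨅ i, hH.1.eigenvalues i) / opNorm A) ^ 2) * ‖e‖ := by
  have error_step (α : ℂ) : mulVecE A⁻¹ y - (x + α • r) = mulVecE (1 - α • A) e := by
    rw [hr, he, mulVecE_inv_sub_add_smul_residual hA]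
  have coercive :
      (⨅ i, hH.1.eigenvalues i) * ‖e‖ ^ 2 ≤ re ⟪e, toEuclideanCLM (𝕜 := ℂ) A e⟫_ℂ := by
    calc _ ≤ re ⟪e, toEuclideanCLM (𝕜 := ℂ) H e⟫_ℂ := hH.1.iInf_eigenvalues_mul_norm_sq_le e
      _ = _ := by rw [hHdef, re_inner_toEuclideanCLM_half_smul_conjTranspose_add]
  obtain ⟨α, hα⟩ := exists_norm_sub_smul_apply_le (toEuclideanCLM (𝕜 := ℂ) A)
    (Real.iInf_nonneg fun i => (hH.eigenvalues_pos i).le) coercive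
  exact ⟨error_step, α, by rwa [error_step, mulVecE_one_sub_smul]⟩

theorem stmt14 {n : ℕ} (hn : 0 < n) (A : Matrix (Fin n) (Fin n) ℂ)
    (hA : IsUnit A)
    (H : Matrix (Fin n) (Fin n) ℂ) (hHdef : H = (1 / 2 : ℂ) • (Aᴴ + A))
    (hH : H.PosDef) (y x r e : EuclideanSpace ℂ (Fin n))
    (hr : r = y - mulVecE A x) (he : e = mulVecE A⁻¹ y - x) :
    (∀ α : ℂ, mulVecE A⁻¹ y - (x + α • r) = mulVecE (1 - α • A) e)
    ∧ ∃ α : ℂ, ‖mulVecE A⁻¹ y - (x + α • r)‖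
        ≤ Real.sqrt (1 - ((⨅ i, hH.1.eigenvalues i) / opNorm A) ^ 2) * ‖e‖ :=
  stmt14_general A hA H hHdef hH y x r e hr he
end
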